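/- Fix d ≤ r and λ > 0, and define the EgReg estimator β̂^E(ω) = V_d D_d^{-1} Φ_d (Φ_d + λ I_d)^{-1} U_d' Y(ω). Then the conditional reducible prediction risk satisfies 𝔼[ tr( (β̂^E − V_d V_d' β*)' Σ_x (β̂^E − V_d V_d' β*) ) ] = tr(Σ_ε)·tr(V_d D_d^{-2} Φ_d² (Φ_d + λ I_d)^{-2} V_d' Σ_x) + λ²·vec(β*)'(I_q ⊗ V_d (Φ_d + λ I_d)^{-1} V_d' Σ_x V_d (Φ_d + λ I_d)^{-1} V_d') vec(β*). -/

import Mathlib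

open Matrix
open scoped Kronecker

/-- The vectorization `vec(β)` of a `p × q` matrix, indexed to match `I_q ⊗ A`
(the index `(k, i)` with `k ∈ Fin q`, `i ∈ Fin p` corresponds to entry `β i k`). -/
def vecM {p q : ℕ} (β : Matrix (Fin p) (Fin q) ℝ) : Fin q × Fin p → ℝ :=
  fun ki => β ki.2 ki.1

/-- EgReg reducible prediction risk
`R_E(d, λ) = tr(Σ_ε)·tr(V_d D_d⁻² Φ_d² (Φ_d + λ I_d)⁻² V_d' Σ_x)
  + λ²·vec(β*)'(I_q ⊗ V_d (Φ_d + λ I_d)⁻¹ V_d' Σ_x V_d (Φ_d + λ I_d)⁻¹ V_d') vec(β*)`. -/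
noncomputable def RE {p q d : ℕ}
    (Vd : Matrix (Fin p) (Fin d) ℝ) (Dd Φd : Matrix (Fin d) (Fin d) ℝ)
    (Sx : Matrix (Fin p) (Fin p) ℝ) (Se : Matrix (Fin q) (Fin q) ℝ)
    (β : Matrix (Fin p) (Fin q) ℝ) (lam : ℝ) : ℝ :=
  Se.trace * (Vd * (Dd ^ 2)⁻¹ * Φd ^ 2 * ((Φd + lam • 1) ^ 2)⁻¹ * Vdᵀ * Sx).trace
  + lam ^ 2 * vecM β ⬝ᵥ (((1 : Matrix (Fin q) (Fin q) ℝ) ⊗ₖ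
      (Vd * (Φd + lam • 1)⁻¹ * Vdᵀ * Sx * Vd * (Φd + lam • 1)⁻¹ * Vdᵀ)).mulVec (vecM β))

/-- NIECE reducible prediction risk
`R_N(u, d) = tr(Σ_ε)·tr(V_u D_u⁻² V_u' Σ_x)
  + vec(β*)'(I_q ⊗ (V_u V_u' − V_d V_d') Σ_x (V_u V_u' − V_d V_d')) vec(β*)`. -/
noncomputable def RN {p q u d : ℕ}
    (Vu : Matrix (Fin p) (Fin u) ℝ) (Du : Matrix (Fin u) (Fin u) ℝ)
    (Vd : Matrix (Fin p) (Fin d) ℝ)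
    (Sx : Matrix (Fin p) (Fin p) ℝ) (Se : Matrix (Fin q) (Fin q) ℝ)
    (β : Matrix (Fin p) (Fin q) ℝ) : ℝ :=
  Se.trace * (Vu * (Du ^ 2)⁻¹ * Vuᵀ * Sx).trace
  + vecM β ⬝ᵥ (((1 : Matrix (Fin q) (Fin q) ℝ) ⊗ₖ
      ((Vu * Vuᵀ - Vd * Vdᵀ) * Sx * (Vu * Vuᵀ - Vd * Vdᵀ))).mulVec (vecM β))

/-- The largest eigenvalue of a square matrix. -/
noncomputable def maxEig {m : ℕ} (A : Matrix (Fin m) (Fin m) ℝ) : ℝ :=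
  sSup {t : ℝ | ∃ w : Fin m → ℝ, w ≠ 0 ∧ A.mulVec w = t • w}

open MeasureTheory

/-!
The estimation error splits as `β̂ᴱ - V_d V_d' β* = A + M E` with the deterministic bias
`A = -λ V_d (Φ_d + λ I)⁻¹ V_d' β*` (because `U_d' X = D_d V_d'`) and
`M = V_d D_d⁻¹ Φ_d (Φ_d + λ I)⁻¹ U_d'`.
In the expanded quadratic form the cross term is linear in `E`, hence has mean zero, and the
covariance structure gives `𝔼 tr(E' C E) = tr C · tr Σ_ε`. Finally `tr(M' Σ_x M) = tr(M M' Σ_x)`,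
and `U_d' U_d = I` collapses `M M'` to `V_d D_d⁻² Φ_d² (Φ_d + λ I)⁻² V_d'`.
-/

section WhiteNoise

variable {Ω ι κ : Type*} [MeasurableSpace Ω] {P : Measure Ω} [Fintype ι] [Fintype κ]
  {E : Ω → Matrix ι κ ℝ}

theorem trace_mul_eq_sum (N : Matrix κ ι ℝ) (Z : Matrix ι κ ℝ) :
    (N * Z).trace = ∑ k, ∑ i, N k i * Z i k := by
  simp only [trace, diag, mul_apply]

theorem integrable_trace_mul (hE : ∀ i k, Integrable (fun ω => E ω i k) P) (N : Matrix κ ι ℝ) :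
    Integrable (fun ω => (N * E ω).trace) P := by
  simp only [trace_mul_eq_sum]
  exact integrable_finsetSum _ fun k _ => integrable_finsetSum _ fun i _ => (hE i k).const_mul _

theorem integral_trace_mul_eq_zero (hE : ∀ i k, Integrable (fun ω => E ω i k) P)
    (hmean : ∀ i k, ∫ ω, E ω i k ∂P = 0) (N : Matrix κ ι ℝ) :
    ∫ ω, (N * E ω).trace ∂P = 0 := by
  have hint : ∀ k i, Integrable (fun ω => N k i * E ω i k) P := fun k i => (hE i k).const_mul _
  simp_rw [trace_mul_eq_sum, integral_finsetSum _ fun k _ => integrable_finsetSum _ fun i _ =>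
    hint k i, integral_finsetSum _ fun i _ => hint _ i, integral_const_mul, hmean]
  simp

theorem trace_transpose_mul_mul_eq_sum (C : Matrix ι ι ℝ) (Z : Matrix ι κ ℝ) :
    (Zᵀ * C * Z).trace = ∑ k, ∑ j, ∑ i, C i j * (Z i k * Z j k) := by
  simp only [trace, diag, mul_apply, transpose_apply, Finset.sum_mul]
  exact Finset.sum_congr rfl fun k _ => Finset.sum_congr rfl fun j _ =>
    Finset.sum_congr rfl fun i _ => by ring

theorem integrable_trace_transpose_mul_mul (hL2 : ∀ i k, MemLp (fun ω => E ω i k) 2 P)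
    (C : Matrix ι ι ℝ) : Integrable (fun ω => ((E ω)ᵀ * C * E ω).trace) P := by
  simp only [trace_transpose_mul_mul_eq_sum]
  exact integrable_finsetSum _ fun k _ => integrable_finsetSum _ fun j _ =>
    integrable_finsetSum _ fun i _ => ((hL2 i k).integrable_mul (hL2 j k)).const_mul _

theorem integral_trace_transpose_mul_mul [DecidableEq ι] (Se : Matrix κ κ ℝ)
    (hL2 : ∀ i k, MemLp (fun ω => E ω i k) 2 P)
    (hcov : ∀ i j k l, ∫ ω, E ω i k * E ω j l ∂P = (if i = j then (1:ℝ) else 0) * Se k l)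
    (C : Matrix ι ι ℝ) :
    ∫ ω, ((E ω)ᵀ * C * E ω).trace ∂P = C.trace * Se.trace := by
  have hint : ∀ k j i, Integrable (fun ω => C i j * (E ω i k * E ω j k)) P :=
    fun k j i => ((hL2 i k).integrable_mul (hL2 j k)).const_mul _
  simp_rw [trace_transpose_mul_mul_eq_sum, integral_finsetSum _ fun k _ =>
    integrable_finsetSum _ fun j _ => integrable_finsetSum _ fun i _ => hint k j i,
    integral_finsetSum _ fun j _ => integrable_finsetSum _ fun i _ => hint _ j i,
    integral_finsetSum _ fun i _ => hint _ _ i, integral_const_mul, hcov]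
  simp [trace, Finset.sum_mul_sum, Finset.sum_comm (γ := ι)]

end WhiteNoise

theorem trace_transpose_add_mul_mul_add {R ι κ m : Type*} [CommRing R] [Fintype ι] [Fintype κ]
    [Fintype m] (A : Matrix m κ R) (M : Matrix m ι R) (S : Matrix m m R) (Z : Matrix ι κ R) :
    ((A + M * Z)ᵀ * S * (A + M * Z)).trace
      = (Aᵀ * S * A).trace + (Aᵀ * (S + Sᵀ) * M * Z).trace + (Zᵀ * (Mᵀ * S * M) * Z).trace := by
  have hcross : ((M * Z)ᵀ * S * A).trace = (Aᵀ * Sᵀ * M * Z).trace := by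
    rw [← trace_transpose]
    simp only [transpose_mul, transpose_transpose, Matrix.mul_assoc]
  simp only [transpose_add, Matrix.add_mul, Matrix.mul_add, trace_add, hcross]
  simp only [transpose_mul, Matrix.mul_assoc]
  ring

theorem integral_trace_transpose_add_mul_mul_add {Ω ι κ m : Type*} [MeasurableSpace Ω]
    {P : Measure Ω} [IsProbabilityMeasure P] [Fintype ι] [DecidableEq ι] [Fintype κ] [Fintype m]
    {E : Ω → Matrix ι κ ℝ} (Se : Matrix κ κ ℝ)
    (hL2 : ∀ i k, MemLp (fun ω => E ω i k) 2 P)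
    (hmean : ∀ i k, ∫ ω, E ω i k ∂P = 0)
    (hcov : ∀ i j k l, ∫ ω, E ω i k * E ω j l ∂P = (if i = j then (1:ℝ) else 0) * Se k l)
    (A : Matrix m κ ℝ) (M : Matrix m ι ℝ) (S : Matrix m m ℝ) :
    ∫ ω, ((A + M * E ω)ᵀ * S * (A + M * E ω)).trace ∂P
      = (Aᵀ * S * A).trace + Se.trace * (Mᵀ * S * M).trace := by
  have hE : ∀ i k, Integrable (fun ω => E ω i k) P := fun i k => (hL2 i k).integrable one_le_two
  have hlin : Integrable (fun ω => (Aᵀ * (S + Sᵀ) * M * E ω).trace) P := integrable_trace_mul hE _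
  have hquad : Integrable (fun ω => ((E ω)ᵀ * (Mᵀ * S * M) * E ω).trace) P :=
    integrable_trace_transpose_mul_mul hL2 _
  have hconst_lin :
      Integrable (fun ω => (Aᵀ * S * A).trace + (Aᵀ * (S + Sᵀ) * M * E ω).trace) P :=
    (integrable_const _).add hlin
  simp only [trace_transpose_add_mul_mul_add]
  rw [integral_add hconst_lin hquad, integral_add (integrable_const _) hlin, integral_const,
    integral_trace_mul_eq_zero hE hmean, integral_trace_transpose_mul_mul Se hL2 hcov]
  simp [mul_comm]

theorem inv_diagonal_of_ne_zero {𝕜 κ : Type*} [Field 𝕜] [Fintype κ] [DecidableEq κ]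
    {v : κ → 𝕜} (hv : ∀ i, v i ≠ 0) : (diagonal v)⁻¹ = diagonal fun i => (v i)⁻¹ :=
  inv_eq_right_inv <| by
    rw [diagonal_mul_diagonal, ← diagonal_one]
    exact congrArg diagonal (funext fun i => mul_inv_cancel₀ (hv i))

theorem diagonal_add_smul_one {R κ : Type*} [CommRing R] [DecidableEq κ] (v : κ → R) (c : R) :
    diagonal v + c • (1 : Matrix κ κ R) = diagonal fun i => v i + c := by
  rw [smul_one_eq_diagonal, diagonal_add]

section Orthonormal

variable {R ι κ m n : Type*} [CommRing R] [Fintype n] [DecidableEq ι] [DecidableEq κ]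
  {U : Matrix n ι R}

theorem transpose_submatrix_mul_submatrix_of_orthonormal (hU : Uᵀ * U = 1)
    {f : κ → ι} (hf : Function.Injective f) :
    (U.submatrix id f)ᵀ * U.submatrix id f = 1 := by
  rw [transpose_submatrix, ← submatrix_mul _ _ _ _ _ Function.bijective_id, hU, submatrix_one f hf]

theorem transpose_submatrix_mul_svd [Fintype ι] [Fintype κ] (hU : Uᵀ * U = 1) (σ : ι → R)
    (V : Matrix m ι R) (f : κ → ι) :
    (U.submatrix id f)ᵀ * (U * diagonal σ * Vᵀ) = diagonal (σ ∘ f) * (V.submatrix id f)ᵀ := by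
  have hUf : (U.submatrix id f)ᵀ * U = (1 : Matrix ι ι R).submatrix f id := by rw [← hU]; rfl
  rw [Matrix.mul_assoc, ← Matrix.mul_assoc, hUf]
  ext i j
  simp [mul_apply, one_apply, diagonal_apply]

end Orthonormal

section EgReg

variable {𝕜 κ : Type*} [Field 𝕜] [Fintype κ] [DecidableEq κ] {s g : κ → 𝕜} {lam : 𝕜}

theorem egreg_shrinkage_mul_diagonal (hs : ∀ j, s j ≠ 0) (hg : ∀ j, g j + lam ≠ 0) :
    (diagonal s)⁻¹ * diagonal g * (diagonal g + lam • 1)⁻¹ * diagonal s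
      = 1 - lam • (diagonal g + lam • 1)⁻¹ := by
  rw [diagonal_add_smul_one, inv_diagonal_of_ne_zero hs, inv_diagonal_of_ne_zero hg,
    ← diagonal_one, ← diagonal_smul, diagonal_sub]
  simp only [diagonal_mul_diagonal]
  congr 1
  funext j
  simp only [Pi.smul_apply, smul_eq_mul]
  field_simp [hs j, hg j]
  ring

theorem egreg_shrinkage_mul_transpose (hs : ∀ j, s j ≠ 0) (hg : ∀ j, g j + lam ≠ 0) :
    (diagonal s)⁻¹ * diagonal g * (diagonal g + lam • 1)⁻¹
        * ((diagonal s)⁻¹ * diagonal g * (diagonal g + lam • 1)⁻¹)ᵀ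
      = (diagonal s ^ 2)⁻¹ * diagonal g ^ 2 * ((diagonal g + lam • 1) ^ 2)⁻¹ := by
  have hs2 : ∀ j, s j ^ 2 ≠ 0 := fun j => pow_ne_zero 2 (hs j)
  have hg2 : ∀ j, (g j + lam) ^ 2 ≠ 0 := fun j => pow_ne_zero 2 (hg j)
  simp only [diagonal_add_smul_one, diagonal_pow]
  rw [inv_diagonal_of_ne_zero hs, inv_diagonal_of_ne_zero hg,
    inv_diagonal_of_ne_zero (v := s ^ 2) hs2,
    inv_diagonal_of_ne_zero (v := (fun i => g i + lam) ^ 2) hg2]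
  simp only [diagonal_transpose, diagonal_mul_diagonal]
  congr 1
  funext j
  simp only [Pi.pow_apply]
  field_simp

variable {n p q : Type*} [Fintype n] [Fintype p]

theorem egreg_error_eq (hs : ∀ j, s j ≠ 0) (hg : ∀ j, g j + lam ≠ 0)
    {Ud : Matrix n κ 𝕜} {Vd : Matrix p κ 𝕜} {X : Matrix n p 𝕜}
    (hUdX : Udᵀ * X = diagonal s * Vdᵀ) (β : Matrix p q 𝕜) (Z : Matrix n q 𝕜) :
    Vd * (diagonal s)⁻¹ * diagonal g * (diagonal g + lam • 1)⁻¹ * Udᵀ * (X * β + Z)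
        - Vd * Vdᵀ * β
      = (-lam) • (Vd * (diagonal g + lam • 1)⁻¹ * Vdᵀ * β)
        + Vd * (diagonal s)⁻¹ * diagonal g * (diagonal g + lam • 1)⁻¹ * Udᵀ * Z := by
  have hsignal : Vd * (diagonal s)⁻¹ * diagonal g * (diagonal g + lam • 1)⁻¹ * Udᵀ * (X * β)
      = Vd * Vdᵀ * β - lam • (Vd * (diagonal g + lam • 1)⁻¹ * Vdᵀ * β) := calc
    _ = Vd * ((diagonal s)⁻¹ * diagonal g * (diagonal g + lam • 1)⁻¹ * (Udᵀ * X)) * β := by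
      simp only [Matrix.mul_assoc]
    _ = Vd * (1 - lam • (diagonal g + lam • 1)⁻¹) * Vdᵀ * β := by
      rw [hUdX, ← egreg_shrinkage_mul_diagonal hs hg]
      simp only [Matrix.mul_assoc]
    _ = _ := by
      simp only [Matrix.mul_sub, Matrix.sub_mul, Matrix.mul_one, Matrix.mul_smul, Matrix.smul_mul]
  rw [Matrix.mul_add, hsignal, neg_smul]
  abel

theorem egreg_bias_trace [Fintype q] (Vd : Matrix p κ 𝕜) (β : Matrix p q 𝕜) (S : Matrix p p 𝕜) :
    (((-lam) • (Vd * (diagonal g + lam • 1)⁻¹ * Vdᵀ * β))ᵀ * S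
        * ((-lam) • (Vd * (diagonal g + lam • 1)⁻¹ * Vdᵀ * β))).trace
      = lam ^ 2 * (βᵀ * (Vd * (diagonal g + lam • 1)⁻¹ * Vdᵀ * S * Vd * (diagonal g + lam • 1)⁻¹
          * Vdᵀ) * β).trace := by
  have hsymm : (diagonal g + lam • 1)⁻¹ᵀ = (diagonal g + lam • 1)⁻¹ := by
    rw [transpose_nonsing_inv, diagonal_add_smul_one, diagonal_transpose]
  simp only [transpose_smul, transpose_mul, transpose_transpose, hsymm, Matrix.smul_mul,
    Matrix.mul_smul, smul_smul, trace_smul, smul_eq_mul, Matrix.mul_assoc]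
  ring

theorem egreg_variance_trace (hs : ∀ j, s j ≠ 0) (hg : ∀ j, g j + lam ≠ 0)
    {Ud : Matrix n κ 𝕜} (hUd : Udᵀ * Ud = 1) (Vd : Matrix p κ 𝕜) (S : Matrix p p 𝕜) :
    ((Vd * (diagonal s)⁻¹ * diagonal g * (diagonal g + lam • 1)⁻¹ * Udᵀ)ᵀ * S
        * (Vd * (diagonal s)⁻¹ * diagonal g * (diagonal g + lam • 1)⁻¹ * Udᵀ)).trace
      = (Vd * (diagonal s ^ 2)⁻¹ * diagonal g ^ 2 * ((diagonal g + lam • 1) ^ 2)⁻¹ * Vdᵀ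
          * S).trace := by
  set W := (diagonal s)⁻¹ * diagonal g * (diagonal g + lam • 1)⁻¹
  have hM : Vd * (diagonal s)⁻¹ * diagonal g * (diagonal g + lam • 1)⁻¹ * Udᵀ = Vd * W * Udᵀ := by
    simp only [W, Matrix.mul_assoc]
  have hMMt : Vd * W * Udᵀ * (Vd * W * Udᵀ)ᵀ = Vd * (W * Wᵀ) * Vdᵀ := by
    simp only [transpose_mul, transpose_transpose, Matrix.mul_assoc]
    rw [← Matrix.mul_assoc Udᵀ Ud, hUd, Matrix.one_mul]
  rw [hM, trace_mul_cycle, hMMt, egreg_shrinkage_mul_transpose hs hg]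
  simp only [Matrix.mul_assoc]

end EgReg

theorem vecM_dotProduct_one_kronecker_mulVec {p q : ℕ} (β : Matrix (Fin p) (Fin q) ℝ)
    (K : Matrix (Fin p) (Fin p) ℝ) :
    vecM β ⬝ᵥ ((1 ⊗ₖ K) *ᵥ vecM β) = (βᵀ * K * β).trace := by
  change β.vec ⬝ᵥ ((1 ⊗ₖ K) *ᵥ β.vec) = _
  rw [← vec_mul_eq_mulVec, vec_dotProduct_vec, Matrix.mul_assoc]

theorem egreg_conditional_reducible_risk_general
    (n p q r : ℕ)
    (X : Matrix (Fin n) (Fin p) ℝ)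
    (U : Matrix (Fin n) (Fin r) ℝ) (V : Matrix (Fin p) (Fin r) ℝ) (σ : Fin r → ℝ)
    (hSVD : X = U * Matrix.diagonal σ * Vᵀ)
    (hU : Uᵀ * U = 1)
    (hσpos : ∀ j, 0 < σ j)
    (π : Equiv.Perm (Fin r)) (φ : Fin r → ℝ)
    (hφpos : ∀ j, 0 < φ j)
    (Sx : Matrix (Fin p) (Fin p) ℝ)
    (Se : Matrix (Fin q) (Fin q) ℝ)
    (β : Matrix (Fin p) (Fin q) ℝ)
    (d : ℕ) (hdr : d ≤ r) (lam : ℝ) (hlam : 0 < lam)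
    -- probability space and mean-zero noise with Var(vec E) = Σ_ε ⊗ I_n
    {Ω : Type*} [MeasurableSpace Ω] (P : Measure Ω) [IsProbabilityMeasure P]
    (E : Ω → Matrix (Fin n) (Fin q) ℝ)
    (hL2 : ∀ i k, MemLp (fun ω => E ω i k) 2 P)
    (hmean : ∀ i k, ∫ ω, E ω i k ∂P = 0)
    (hcov : ∀ i j k l, ∫ ω, E ω i k * E ω j l ∂P = (if i = j then (1:ℝ) else 0) * Se k l)
    -- the response and the EgReg estimator
    (Y : Ω → Matrix (Fin n) (Fin q) ℝ) (hY : ∀ ω, Y ω = X * β + E ω)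
    (Vd : Matrix (Fin p) (Fin d) ℝ) (hVd : Vd = V.submatrix id (fun j => π (Fin.castLE hdr j)))
    (Ud : Matrix (Fin n) (Fin d) ℝ) (hUd : Ud = U.submatrix id (fun j => π (Fin.castLE hdr j)))
    (Dd : Matrix (Fin d) (Fin d) ℝ) (hDd : Dd = Matrix.diagonal (fun j => σ (π (Fin.castLE hdr j))))
    (Φd : Matrix (Fin d) (Fin d) ℝ) (hΦd : Φd = Matrix.diagonal (fun j => φ (Fin.castLE hdr j)))
    (βE : Ω → Matrix (Fin p) (Fin q) ℝ)
    (hβE : ∀ ω, βE ω = Vd * Dd⁻¹ * Φd * (Φd + lam • 1)⁻¹ * Udᵀ * Y ω) :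
    ∫ ω, ((βE ω - Vd * Vdᵀ * β)ᵀ * Sx * (βE ω - Vd * Vdᵀ * β)).trace ∂P =
      RE Vd Dd Φd Sx Se β lam := by
  have hs : ∀ j, σ (π (Fin.castLE hdr j)) ≠ 0 := fun j => (hσpos _).ne'
  have hg : ∀ j, φ (Fin.castLE hdr j) + lam ≠ 0 := fun j => (add_pos (hφpos _) hlam).ne'
  have hUdX : Udᵀ * X = Dd * Vdᵀ := by
    rw [hUd, hVd, hDd, hSVD]
    exact transpose_submatrix_mul_svd hU σ V _
  have hUdUd : Udᵀ * Ud = 1 := by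
    rw [hUd]
    exact transpose_submatrix_mul_submatrix_of_orthonormal hU
      (π.injective.comp (Fin.castLE_injective hdr))
  subst hDd hΦd
  simp_rw [hβE, hY, egreg_error_eq hs hg hUdX]
  rw [integral_trace_transpose_add_mul_mul_add Se hL2 hmean hcov, egreg_bias_trace,
    egreg_variance_trace hs hg hUdUd, RE, vecM_dotProduct_one_kronecker_mulVec]
  ring

theorem egreg_conditional_reducible_risk
    (n p q r : ℕ)
    (X : Matrix (Fin n) (Fin p) ℝ)
    (U : Matrix (Fin n) (Fin r) ℝ) (V : Matrix (Fin p) (Fin r) ℝ) (σ : Fin r → ℝ)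
    (hrank : X.rank = r)
    (hSVD : X = U * Matrix.diagonal σ * Vᵀ)
    (hU : Uᵀ * U = 1) (hV : Vᵀ * V = 1)
    (hσpos : ∀ j, 0 < σ j) (hσanti : Antitone σ)
    (π : Equiv.Perm (Fin r)) (φ : Fin r → ℝ)
    (hφpos : ∀ j, 0 < φ j) (hφanti : Antitone φ)
    (Sx : Matrix (Fin p) (Fin p) ℝ) (hSx : Sx.PosSemidef)
    (Se : Matrix (Fin q) (Fin q) ℝ) (hSe : Se.PosSemidef)
    (β : Matrix (Fin p) (Fin q) ℝ)
    (d : ℕ) (hdr : d ≤ r) (lam : ℝ) (hlam : 0 < lam)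
    -- probability space and mean-zero noise with Var(vec E) = Σ_ε ⊗ I_n
    {Ω : Type*} [MeasurableSpace Ω] (P : Measure Ω) [IsProbabilityMeasure P]
    (E : Ω → Matrix (Fin n) (Fin q) ℝ)
    (hL2 : ∀ i k, MemLp (fun ω => E ω i k) 2 P)
    (hmean : ∀ i k, ∫ ω, E ω i k ∂P = 0)
    (hcov : ∀ i j k l, ∫ ω, E ω i k * E ω j l ∂P = (if i = j then (1:ℝ) else 0) * Se k l)
    -- the response and the EgReg estimator
    (Y : Ω → Matrix (Fin n) (Fin q) ℝ) (hY : ∀ ω, Y ω = X * β + E ω)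
    (Vd : Matrix (Fin p) (Fin d) ℝ) (hVd : Vd = V.submatrix id (fun j => π (Fin.castLE hdr j)))
    (Ud : Matrix (Fin n) (Fin d) ℝ) (hUd : Ud = U.submatrix id (fun j => π (Fin.castLE hdr j)))
    (Dd : Matrix (Fin d) (Fin d) ℝ) (hDd : Dd = Matrix.diagonal (fun j => σ (π (Fin.castLE hdr j))))
    (Φd : Matrix (Fin d) (Fin d) ℝ) (hΦd : Φd = Matrix.diagonal (fun j => φ (Fin.castLE hdr j)))
    (βE : Ω → Matrix (Fin p) (Fin q) ℝ)
    (hβE : ∀ ω, βE ω = Vd * Dd⁻¹ * Φd * (Φd + lam • 1)⁻¹ * Udᵀ * Y ω) :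
    ∫ ω, ((βE ω - Vd * Vdᵀ * β)ᵀ * Sx * (βE ω - Vd * Vdᵀ * β)).trace ∂P =
      RE Vd Dd Φd Sx Se β lam :=
  egreg_conditional_reducible_risk_general n p q r X U V σ hSVD hU hσpos π φ hφpos Sx Se β d hdr lam
    hlam P E hL2 hmean hcov Y hY Vd hVd Ud hUd Dd hDd Φd hΦd βE hβE
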